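/- arXiv:1104.5646 — 2 statements merged into one kernel-verified Lean document; each statement's English description precedes it below -/
import Mathlib

section
/- Let ρ be a representation of the cyclic quiver G_{2m} in which all the maps α_i and β_i are bijective, and let T : V_1 → V_1 be the associated monodromy. Then dim ker M_ρ = dim ker(T − id_{V_1}) and dim coker M_ρ = dim ker(T − id_{V_1}). -/
open Module
open Fin.NatCast

/-- A representation of the cyclic quiver `G_{2m}`: `W i` is the odd vertex space `V_{2i+1}`
(0-based, so `W 0 = V_1`), `U i` is the even vertex space `V_{2i+2}`,
`α i : V_{2i+1} → V_{2i+2}` and `β i : V_{2i+3} → V_{2i+2}` (indices of vertices mod `2m`). -/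
structure QRep (κ : Type) [Field κ] (m : ℕ) [NeZero m] where
  W : Fin m → Type
  U : Fin m → Type
  [accW : ∀ i, AddCommGroup (W i)]
  [accU : ∀ i, AddCommGroup (U i)]
  [modW : ∀ i, Module κ (W i)]
  [modU : ∀ i, Module κ (U i)]
  [fdW : ∀ i, FiniteDimensional κ (W i)]
  [fdU : ∀ i, FiniteDimensional κ (U i)]
  α : ∀ i, W i →ₗ[κ] U i
  β : ∀ i, W (i + 1) →ₗ[κ] U i

attribute [instance] QRep.accW QRep.accU QRep.modW QRep.modU QRep.fdW QRep.fdU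

namespace QRep

variable {κ : Type} [Field κ] {m : ℕ} [NeZero m]

/-- The block matrix `M_ρ : ⊕ V_{2i-1} → ⊕ V_{2i}`,
`M_ρ(v₁, v₃, …) = (α₁v₁ − β₁v₃, α₂v₃ − β₂v₅, …, α_m v_{2m−1} − β_m v₁)`. -/
def blockMap (ρ : QRep κ m) : (∀ i, ρ.W i) →ₗ[κ] ∀ i, ρ.U i :=
  LinearMap.pi fun i => (ρ.α i).comp (LinearMap.proj i) - (ρ.β i).comp (LinearMap.proj (i + 1))

/-- Direct sum of two representations. -/
def dsum (ρ σ : QRep κ m) : QRep κ m where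
  W i := ρ.W i × σ.W i
  U i := ρ.U i × σ.U i
  α i := (ρ.α i).prodMap (σ.α i)
  β i := (ρ.β i).prodMap (σ.β i)

/-- Direct sum of a finite family of representations. -/
def dsumFin {N : ℕ} (f : Fin N → QRep κ m) : QRep κ m where
  W i := ∀ j, (f j).W i
  U i := ∀ j, (f j).U i
  α i := LinearMap.pi fun j => ((f j).α i).comp (LinearMap.proj j)
  β i := LinearMap.pi fun j => ((f j).β i).comp (LinearMap.proj j)

/-- An isomorphism of representations. -/
structure Iso (ρ σ : QRep κ m) where
  φW : ∀ i, ρ.W i ≃ₗ[κ] σ.W i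
  φU : ∀ i, ρ.U i ≃ₗ[κ] σ.U i
  commα : ∀ i x, φU i (ρ.α i x) = σ.α i (φW i x)
  commβ : ∀ i x, φU i (ρ.β i x) = σ.β i (φW (i + 1) x)

def IsIsomorphic (ρ σ : QRep κ m) : Prop := Nonempty (Iso ρ σ)

/-- A representation is nontrivial if some vertex space is nonzero. -/
def NontrivialRep (ρ : QRep κ m) : Prop :=
  (∃ i, Nontrivial (ρ.W i)) ∨ (∃ i, Nontrivial (ρ.U i))

/-- A representation is indecomposable if it is nontrivial and not isomorphic to a direct
sum of two nontrivial representations. -/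
def Indecomposable (ρ : QRep κ m) : Prop :=
  ρ.NontrivialRep ∧ ∀ σ τ : QRep κ m, σ.NontrivialRep → τ.NontrivialRep →
    ¬ ρ.IsIsomorphic (σ.dsum τ)

end QRep

namespace QRep

variable {κ : Type} [Field κ] {m : ℕ} [NeZero m]

/-- Transport of an odd vertex space along an equality of indices (linear map version). -/
def castW (ρ : QRep κ m) {a b : Fin m} (h : a = b) : ρ.W a →ₗ[κ] ρ.W b := by
  subst h; exact LinearMap.id

/-- Transport of an odd vertex space along an equality of indices (equiv version). -/
def castWE (ρ : QRep κ m) {a b : Fin m} (h : a = b) : ρ.W a ≃ₗ[κ] ρ.W b := by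
  subst h; exact LinearEquiv.refl κ _

/-- Iterated composite of the maps `g i : W i → W (i+1)`, `n` steps starting at vertex `i`. -/
def cyclicComp (ρ : QRep κ m) (g : ∀ i, ρ.W i →ₗ[κ] ρ.W (i + 1)) :
    (n : ℕ) → ∀ i : Fin m, ρ.W i →ₗ[κ] ρ.W (i + (n : Fin m))
  | 0, i => ρ.castW (by simp)
  | n + 1, i =>
      (ρ.castW (show i + (n : Fin m) + 1 = i + ((n + 1 : ℕ) : Fin m) by push_cast; rw [add_assoc])).comp
        ((g (i + (n : Fin m))).comp (cyclicComp ρ g n i))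

/-- The monodromy `T = β_m⁻¹ ∘ α_m ∘ ⋯ ∘ β_1⁻¹ ∘ α_1 : V_1 → V_1`, where
`g i = β i⁻¹ ∘ α i` is given as data. -/
def monodromy (ρ : QRep κ m) (g : ∀ i, ρ.W i →ₗ[κ] ρ.W (i + 1)) : ρ.W 0 →ₗ[κ] ρ.W 0 :=
  (ρ.castW (show (0 : Fin m) + (m : Fin m) = 0 by simp [Fin.natCast_self])).comp
    (cyclicComp ρ g m 0)

/-- Iterated composite of the equivalences `e i : W i ≃ W (i+1)`, `n` steps starting at `i`. -/
def cyclicCompE (ρ : QRep κ m) (e : ∀ i, ρ.W i ≃ₗ[κ] ρ.W (i + 1)) :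
    (n : ℕ) → ∀ i : Fin m, ρ.W i ≃ₗ[κ] ρ.W (i + (n : Fin m))
  | 0, i => ρ.castWE (by simp)
  | n + 1, i =>
      ((cyclicCompE ρ e n i).trans (e (i + (n : Fin m)))).trans
        (ρ.castWE (show i + (n : Fin m) + 1 = i + ((n + 1 : ℕ) : Fin m) by push_cast; rw [add_assoc]))

/-- `T_i`, the monodromy based at the odd vertex `V_{2i+1}` (so `Ti e 0` is `T_m = T`). -/
def Ti (ρ : QRep κ m) (e : ∀ i, ρ.W i ≃ₗ[κ] ρ.W (i + 1)) (i : Fin m) : ρ.W i ≃ₗ[κ] ρ.W i :=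
  (cyclicCompE ρ e m i).trans (ρ.castWE (show i + (m : Fin m) = i by simp [Fin.natCast_self]))

/-- `C_i = g_i ∘ ⋯ ∘ g_1 : V_1 → V_{2i+1}`. -/
def Ci (ρ : QRep κ m) (e : ∀ i, ρ.W i ≃ₗ[κ] ρ.W (i + 1)) (i : Fin m) : ρ.W 0 ≃ₗ[κ] ρ.W i :=
  (cyclicCompE ρ e (i : ℕ) 0).trans
    (ρ.castWE (show (0 : Fin m) + ((i : ℕ) : Fin m) = i by simp [Fin.cast_val_eq_self]))

end QRep

/-- Index set of the basis vectors `e_l`, `p ≤ l ≤ q`, `l ≡ j (mod 2m)`,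
of a vertex space of the string representation `ρ(p,q)`. -/
noncomputable def strIdx (m : ℕ) (p q : ℤ) (j : ZMod (2 * m)) : Finset ℤ :=
  (Finset.Icc p q).filter fun l => ((l : ZMod (2 * m)) = j)

/-- The linear map sending the basis vector `e_l` (`l ∈ T`) to the coordinate `l + d` (if present):
in matrix terms, the map whose `(l', l)` entry is `1` iff `l' + d = l`. -/
def eMap (κ : Type) [Field κ] (S T : Finset ℤ) (d : ℤ) : (S → κ) →ₗ[κ] T → κ where
  toFun f l := if h : ((l : ℤ) + d) ∈ S then f ⟨(l : ℤ) + d, h⟩ else 0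
  map_add' f g := by
    funext l
    by_cases h : ((l : ℤ) + d) ∈ S <;> simp [h]
  map_smul' c f := by
    funext l
    by_cases h : ((l : ℤ) + d) ∈ S <;> simp [h]

/-- The string representation `ρ(p,q)`: the vertex space at vertex `j` has basis
`{e_l : p ≤ l ≤ q, l ≡ j (mod 2m)}`, `α` sends `e_l` to `e_{l+1}` if `l+1 ≤ q` (else `0`),
and `β` sends `e_l` to `e_{l−1}` if `l−1 ≥ p` (else `0`). -/
noncomputable def strRep (κ : Type) [Field κ] (m : ℕ) [NeZero m] (p q : ℤ) : QRep κ m where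
  W i := strIdx m p q ((2 * (i : ℕ) + 1 : ℕ)) → κ
  U i := strIdx m p q ((2 * (i : ℕ) + 2 : ℕ)) → κ
  α _ := eMap κ _ _ (-1)
  β _ := eMap κ _ _ 1

/-- The `k × k` Jordan block `J(λ,k)`: `λ` on the diagonal, `1` on the superdiagonal. -/
def jordanMatrix (κ : Type) [Field κ] (lam : κ) (k : ℕ) : Matrix (Fin k) (Fin k) κ :=
  Matrix.of fun a b => if b = a then lam else if (b : ℕ) = (a : ℕ) + 1 then (1 : κ) else 0

/-- The Jordan-cell representation `ρ^J(λ,k)`: every vertex space is `κ^k`, `α_1 = J(λ,k)`,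
and all other maps are the identity. -/
def jordanRep (κ : Type) [Field κ] (m : ℕ) [NeZero m] (lam : κ) (k : ℕ) : QRep κ m where
  W _ := Fin k → κ
  U _ := Fin k → κ
  α i := if i = 0 then (jordanMatrix κ lam k).mulVecLin else LinearMap.id
  β _ := LinearMap.id

/-!
An element of `ker M_ρ` is a family `(v_i)` with `β_i v_{i+1} = α_i v_i`, i.e. `v_{i+1} = g_i v_i`,
so it is determined by `v_0`, and going once around the cycle shows `T v_0 = v_0`; conversely the
orbit of a fixed point of `T` under the `g_i` closes up. Hence `v ↦ v_0` identifies `ker M_ρ` with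
`ker (T - 1)`. Since the `α_i` are bijective, `M_ρ` is a map between spaces of equal dimension, so
its cokernel has the same dimension as its kernel.
-/

lemma LinearMap.finrank_quotient_range_eq_finrank_ker_of_finrank_eq {K V W : Type*}
    [DivisionRing K] [AddCommGroup V] [Module K V] [AddCommGroup W] [Module K W]
    [FiniteDimensional K V] [FiniteDimensional K W] (f : V →ₗ[K] W)
    (h : finrank K V = finrank K W) :
    finrank K (W ⧸ LinearMap.range f) = finrank K (LinearMap.ker f) := by
  have hindex := f.index_eq_of_finiteDimensional
  rw [LinearMap.index_eq_finrank_sub, h] at hindex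
  omega

namespace QRep

variable {κ : Type} [Field κ] {m : ℕ} [NeZero m] (ρ : QRep κ m)

lemma castW_heq {a b : Fin m} (h : a = b) (x : ρ.W a) : HEq (ρ.castW h x) x := by
  subst h; rfl

lemma apply_eq_castW_apply (v : ∀ i, ρ.W i) {a b : Fin m} (h : a = b) :
    v b = ρ.castW h (v a) := by
  subst h; rfl

variable (g : ∀ i, ρ.W i →ₗ[κ] ρ.W (i + 1))

lemma apply_castW_heq {a b : Fin m} (h : a = b) (x : ρ.W a) :
    HEq (g b (ρ.castW h x)) (g a x) := by
  subst h; rfl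

lemma cyclicComp_zero_heq (i : Fin m) (x : ρ.W i) : HEq (ρ.cyclicComp g 0 i x) x :=
  ρ.castW_heq _ x

lemma cyclicComp_succ_heq (n : ℕ) (i : Fin m) (x : ρ.W i) :
    HEq (ρ.cyclicComp g (n + 1) i x) (g (i + n) (ρ.cyclicComp g n i x)) :=
  ρ.castW_heq _ _

lemma monodromy_heq (x : ρ.W 0) : HEq (ρ.monodromy g x) (ρ.cyclicComp g m 0 x) :=
  ρ.castW_heq _ _

lemma mem_ker_blockMap_iff (hβ : ∀ i, Function.Injective (ρ.β i))
    (hg : ∀ i x, ρ.β i (g i x) = ρ.α i x) (v : ∀ i, ρ.W i) :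
    v ∈ LinearMap.ker ρ.blockMap ↔ ∀ i, v (i + 1) = g i (v i) := by
  simp only [LinearMap.mem_ker, blockMap, funext_iff, LinearMap.pi_apply, LinearMap.sub_apply,
    LinearMap.comp_apply, LinearMap.proj_apply, Pi.zero_apply, sub_eq_zero]
  refine forall_congr' fun i => ?_
  rw [← hg, (hβ i).eq_iff, eq_comm]

variable {ρ g}

lemma apply_add_natCast_eq_cyclicComp {v : ∀ i, ρ.W i} (hv : ∀ i, v (i + 1) = g i (v i))
    (n : ℕ) (i : Fin m) : v (i + n) = ρ.cyclicComp g n i (v i) := by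
  induction n with
  | zero => exact ρ.apply_eq_castW_apply v _
  | succ n ih =>
    rw [cyclicComp, LinearMap.comp_apply, LinearMap.comp_apply, ← ih, ← hv]
    exact ρ.apply_eq_castW_apply v _

lemma eq_zero_of_apply_zero_eq_zero {v : ∀ i, ρ.W i} (hv : ∀ i, v (i + 1) = g i (v i))
    (h0 : v 0 = 0) : v = 0 := by
  funext i
  rw [ρ.apply_eq_castW_apply v (show (0 : Fin m) + ((i : ℕ) : Fin m) = i by simp),
    apply_add_natCast_eq_cyclicComp hv, h0, map_zero, map_zero, Pi.zero_apply]

lemma monodromy_apply_zero {v : ∀ i, ρ.W i} (hv : ∀ i, v (i + 1) = g i (v i)) :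
    ρ.monodromy g (v 0) = v 0 := by
  rw [monodromy, LinearMap.comp_apply, ← apply_add_natCast_eq_cyclicComp hv]
  exact (ρ.apply_eq_castW_apply v _).symm

variable (g)

def orbit (x : ρ.W 0) (i : Fin m) : ρ.W i :=
  ρ.castW (by simp) (ρ.cyclicComp g i 0 x)

lemma orbit_zero (x : ρ.W 0) : ρ.orbit g x 0 = x :=
  eq_of_heq ((ρ.castW_heq _ _).trans (ρ.cyclicComp_zero_heq g 0 x))

variable {g}

lemma cyclicComp_val_add_one_heq {x : ρ.W 0} (hx : ρ.monodromy g x = x) (i : Fin m) :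
    HEq (ρ.cyclicComp g (i + 1 : Fin m) 0 x) (ρ.cyclicComp g (i + 1 : ℕ) 0 x) := by
  by_cases hi : (i : ℕ) + 1 < m
  · rw [Fin.val_add_one_of_lt' hi]
  · have hwrap : ((i + 1 : Fin m) : ℕ) = 0 := by
      rw [Fin.val_add, Fin.val_one', Nat.add_mod_mod, show (i : ℕ) + 1 = m by omega,
        Nat.mod_self]
    rw [hwrap, show (i : ℕ) + 1 = m by omega]
    exact (ρ.cyclicComp_zero_heq g 0 x).trans ((heq_of_eq hx).symm.trans (ρ.monodromy_heq g x))

lemma orbit_succ {x : ρ.W 0} (hx : ρ.monodromy g x = x) (i : Fin m) :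
    ρ.orbit g x (i + 1) = g i (ρ.orbit g x i) :=
  eq_of_heq <| (ρ.castW_heq _ _).trans <| (ρ.cyclicComp_val_add_one_heq hx i).trans <|
    (ρ.cyclicComp_succ_heq g _ 0 x).trans (ρ.apply_castW_heq g _ _).symm

variable (ρ g)

lemma proj_zero_domRestrict_ker_blockMap_injective (hβ : ∀ i, Function.Injective (ρ.β i))
    (hg : ∀ i x, ρ.β i (g i x) = ρ.α i x) :
    Function.Injective ((LinearMap.proj 0).domRestrict (LinearMap.ker ρ.blockMap)) := by
  rw [← LinearMap.ker_eq_bot, LinearMap.ker_eq_bot']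
  rintro ⟨v, hv⟩ h0
  exact Subtype.ext (eq_zero_of_apply_zero_eq_zero ((ρ.mem_ker_blockMap_iff g hβ hg v).1 hv) h0)

lemma range_proj_zero_domRestrict_ker_blockMap (hβ : ∀ i, Function.Injective (ρ.β i))
    (hg : ∀ i x, ρ.β i (g i x) = ρ.α i x) :
    LinearMap.range ((LinearMap.proj 0).domRestrict (LinearMap.ker ρ.blockMap)) =
      LinearMap.ker (ρ.monodromy g - LinearMap.id) := by
  ext x
  simp only [LinearMap.mem_range, Subtype.exists, LinearMap.domRestrict_apply,
    LinearMap.proj_apply, ρ.mem_ker_blockMap_iff g hβ hg, LinearMap.mem_ker,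
    LinearMap.sub_apply, LinearMap.id_apply, sub_eq_zero]
  constructor
  · rintro ⟨v, hv, rfl⟩
    exact monodromy_apply_zero hv
  · intro hx
    exact ⟨ρ.orbit g x, ρ.orbit_succ hx, ρ.orbit_zero g x⟩

end QRep

/-- If all the maps `α_i`, `β_i` of a representation `ρ` of `G_{2m}` are
bijective and `T : V_1 → V_1` is the monodromy (built from the maps `g i = β i⁻¹ ∘ α i`),
then `dim ker M_ρ = dim ker (T − id)` and `dim coker M_ρ = dim ker (T − id)`. -/
theorem blockMap_ker_coker_of_bijective {κ : Type} [Field κ] {m : ℕ} [NeZero m]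
    (ρ : QRep κ m)
    (hα : ∀ i, Function.Bijective (ρ.α i)) (hβ : ∀ i, Function.Bijective (ρ.β i))
    (g : ∀ i, ρ.W i →ₗ[κ] ρ.W (i + 1)) (hg : ∀ i x, ρ.β i (g i x) = ρ.α i x) :
    finrank κ (LinearMap.ker ρ.blockMap) =
      finrank κ (LinearMap.ker (ρ.monodromy g - LinearMap.id)) ∧
    finrank κ ((∀ i, ρ.U i) ⧸ LinearMap.range ρ.blockMap) =
      finrank κ (LinearMap.ker (ρ.monodromy g - LinearMap.id)) := by
  have hβ' : ∀ i, Function.Injective (ρ.β i) := fun i => (hβ i).injective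
  have hker : finrank κ (LinearMap.ker ρ.blockMap) =
      finrank κ (LinearMap.ker (ρ.monodromy g - LinearMap.id)) := by
    rw [← ρ.range_proj_zero_domRestrict_ker_blockMap g hβ' hg,
      LinearMap.finrank_range_of_inj (ρ.proj_zero_domRestrict_ker_blockMap_injective g hβ' hg)]
  have hdim : finrank κ (∀ i, ρ.W i) = finrank κ (∀ i, ρ.U i) :=
    (LinearEquiv.piCongrRight fun i => LinearEquiv.ofBijective (ρ.α i) (hα i)).finrank_eq
  exact ⟨hker,
    (ρ.blockMap.finrank_quotient_range_eq_finrank_ker_of_finrank_eq hdim).trans hker⟩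
end

section
/- Suppose κ is algebraically closed, and let ρ be a representation of the cyclic quiver G_{2m} in which all the maps α_i and β_i are bijective. Then there exist finitely many pairs (λ_1, k_1), …, (λ_N, k_N) with λ_j ∈ κ \ {0} and k_j ≥ 1 such that ρ is isomorphic to the direct sum ρ^J(λ_1,k_1) ⊕ ⋯ ⊕ ρ^J(λ_N,k_N); the pairs (λ_j, k_j) are the Jordan cells (eigenvalue, block size) of the monodromy T. -/
open Module
open Fin.NatCast

/-!
The maps `e i = (β i)⁻¹ ∘ α i` identify every odd vertex space with `V₁ = W 0`, and around the
cycle they compose to the monodromy `T`. Choosing a Jordan basis `u` of `T` at `W 0` and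
transporting it to `W i` along `e`, composed once more with `T` at every vertex except `W 0`,
concentrates all of `T` on the arrow `α₁`: this is an isomorphism with `⊕ ρ^J(λⱼ, kⱼ)`.

The Jordan form of `T` comes from the structure theorem for the torsion `κ[X]`-module `V₁`
(with `X` acting by `T`): over an algebraically closed field its summands are
`κ[X] ⧸ (X - λ)ᵏ`, in whose basis `(X - λ)ᵏ⁻¹, …, X - λ, 1` multiplication by `X` is `J(λ, k)`.
The eigenvalues are nonzero because `T` is invertible.
-/
open Polynomial

section JordanBlock

variable {κ : Type} [Field κ]

theorem jordanMatrix_apply (lam : κ) (k : ℕ) (a b : Fin k) :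
    jordanMatrix κ lam k a b = if b = a then lam else if (b : ℕ) = a + 1 then 1 else 0 :=
  rfl

local notation "Q[" lam ", " k "]" => κ[X] ⧸ Submodule.span κ[X] {(X - C lam) ^ k}

theorem mk_X_sub_C_pow_eq_zero {lam : κ} {k n : ℕ} (h : k ≤ n) :
    (Submodule.Quotient.mk ((X - C lam) ^ n) : Q[lam, k]) = 0 :=
  (Submodule.Quotient.mk_eq_zero _).mpr (Ideal.mem_span_singleton.mpr (pow_dvd_pow _ h))

theorem X_smul_mk_X_sub_C_pow (lam : κ) (k n : ℕ) :
    (X : κ[X]) • (Submodule.Quotient.mk ((X - C lam) ^ n) : Q[lam, k]) =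
      lam • Submodule.Quotient.mk ((X - C lam) ^ n) +
        Submodule.Quotient.mk ((X - C lam) ^ (n + 1)) := by
  rw [← Submodule.Quotient.mk_smul, ← Submodule.Quotient.mk_smul, ← Submodule.Quotient.mk_add,
    smul_eq_mul, smul_eq_C_mul, pow_succ]
  ring_nf

theorem top_le_span_mk_X_sub_C_pow (lam : κ) (k : ℕ) :
    ⊤ ≤ Submodule.span κ (Set.range fun j : Fin k =>
      (Submodule.Quotient.mk ((X - C lam) ^ (j.rev : ℕ)) : Q[lam, k])) := by
  rintro q -
  obtain ⟨p, rfl⟩ := Submodule.Quotient.mk_surjective _ q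
  rw [← sum_taylor_eq p lam, Polynomial.sum, ← Submodule.mkQ_apply, map_sum]
  refine Submodule.sum_mem _ fun n _ => ?_
  rw [← smul_eq_C_mul, Submodule.mkQ_apply, Submodule.Quotient.mk_smul]
  refine Submodule.smul_mem _ _ ?_
  by_cases hn : n < k
  · exact Submodule.subset_span ⟨Fin.rev ⟨n, hn⟩, by simp⟩
  · rw [mk_X_sub_C_pow_eq_zero (not_lt.mp hn)]
    exact zero_mem _

noncomputable def jordanBasis (lam : κ) (k : ℕ) : Basis (Fin k) κ Q[lam, k] :=
  basisOfTopLeSpanOfCardEqFinrank _ (top_le_span_mk_X_sub_C_pow lam k) <| by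
    rw [Fintype.card_fin, finrank_quotient_span_eq_natDegree, natDegree_pow, natDegree_X_sub_C,
      mul_one]

theorem jordanBasis_apply (lam : κ) (k : ℕ) (j : Fin k) :
    jordanBasis lam k j = Submodule.Quotient.mk ((X - C lam) ^ (j.rev : ℕ)) := by
  simp [jordanBasis]

theorem jordanBasis_equivFun_X_smul (lam : κ) (k : ℕ) (q : Q[lam, k]) :
    (jordanBasis lam k).equivFun ((X : κ[X]) • q) =
      (jordanMatrix κ lam k).mulVec ((jordanBasis lam k).equivFun q) := by
  set b := jordanBasis lam k
  suffices b.equivFun.toLinearMap ∘ₗ DistribSMul.toLinearMap κ _ (X : κ[X]) =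
      (jordanMatrix κ lam k).mulVecLin ∘ₗ b.equivFun.toLinearMap from
    LinearMap.congr_fun this q
  refine b.ext fun j => ?_
  show b.equivFun ((X : κ[X]) • b j) = (jordanMatrix κ lam k).mulVec (b.equivFun (b j))
  have hb : ∀ j, b.equivFun (b j) = Pi.single j 1 := fun j => by
    ext a; rw [Basis.equivFun_self, Pi.single_apply]; exact if_congr eq_comm rfl rfl
  have hshift : b.equivFun (Submodule.Quotient.mk ((X - C lam) ^ ((j.rev : ℕ) + 1))) =
      fun a : Fin k => if (a : ℕ) + 1 = j then (1 : κ) else 0 := by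
    obtain ⟨_ | j, hj⟩ := j
    · rw [mk_X_sub_C_pow_eq_zero (by simp; omega), map_zero]
      simp [funext_iff]
    · have hrev : (Fin.rev ⟨j + 1, hj⟩ : ℕ) + 1 = (Fin.rev (⟨j, by omega⟩ : Fin k) : ℕ) := by
        simp only [Fin.val_rev]; omega
      rw [hrev, ← jordanBasis_apply, hb]
      simp [funext_iff, Pi.single_apply, Fin.ext_iff]
  rw [hb, Matrix.mulVec_single_one, jordanBasis_apply, X_smul_mk_X_sub_C_pow, map_add, map_smul,
    ← jordanBasis_apply, hb, hshift]
  ext a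
  simp only [jordanMatrix_apply, Matrix.col_apply, Pi.add_apply, Pi.smul_apply, Pi.single_apply,
    Fin.ext_iff, smul_eq_mul]
  split_ifs <;> first | omega | contradiction | simp

theorem ne_zero_of_injective_jordanMatrix_mulVec {lam : κ} {k : ℕ}
    (hk : 1 ≤ k) (h : Function.Injective (jordanMatrix κ lam k).mulVec) : lam ≠ 0 := by
  rintro rfl
  have hker :
      (jordanMatrix κ 0 k).mulVec (Pi.single ⟨0, hk⟩ 1) = (jordanMatrix κ 0 k).mulVec 0 := by
    ext a
    simp [jordanMatrix_apply]
  simpa using congrFun (h hker) ⟨0, hk⟩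

end JordanBlock

def LinearEquiv.piSubtypeOfSubsingleton {R ι : Type*} [Semiring R] (P : ι → Prop) [DecidablePred P]
    (F : ι → Type*) [∀ i, AddCommMonoid (F i)] [∀ i, Module R (F i)]
    (hF : ∀ i, ¬ P i → Subsingleton (F i)) : (∀ i, F i) ≃ₗ[R] ∀ i : {i // P i}, F i where
  toFun f i := f i
  invFun g i := if h : P i then g ⟨i, h⟩ else 0
  map_add' _ _ := rfl
  map_smul' _ _ := rfl
  left_inv f := funext fun i => by
    by_cases h : P i
    · simp [h]
    · exact (hF i h).elim _ _
  right_inv g := funext fun i => dif_pos i.2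

theorem LinearMap.injective_of_pi_conj {R V ι : Type*} [Semiring R] [AddCommMonoid V] [Module R V]
    [DecidableEq ι] {F : ι → Type*} [∀ i, AddCommMonoid (F i)] [∀ i, Module R (F i)]
    {T : V →ₗ[R] V} (hT : Function.Injective T) (A : ∀ i, F i →ₗ[R] F i)
    (u : V ≃ₗ[R] ∀ i, F i) (hu : ∀ x i, u (T x) i = A i (u x i)) (i : ι) :
    Function.Injective (A i) := by
  have hsingle : ∀ c, u (T (u.symm (Pi.single i c))) = Pi.single i (A i c) := fun c =>
    funext fun j => by
      rw [hu, u.apply_symm_apply, Pi.apply_single (fun j => A j) (fun j => map_zero _)]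
  intro a b hab
  have : u (T (u.symm (Pi.single i a))) = u (T (u.symm (Pi.single i b))) := by
    rw [hsingle, hsingle, hab]
  exact Pi.single_injective i (u.symm.injective (hT (u.injective this)))

section JordanForm

variable {κ : Type} [Field κ] [IsAlgClosed κ]

theorem exists_associated_X_sub_C_of_irreducible {p : κ[X]} (hp : Irreducible p) :
    ∃ μ : κ, Associated p (X - C μ) := by
  obtain ⟨μ, hμ⟩ := IsAlgClosed.exists_root p (degree_pos_of_irreducible hp).ne'
  exact ⟨μ, ((irreducible_X_sub_C μ).associated_of_dvd hp (dvd_iff_isRoot.mpr hμ)).symm⟩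

theorem exists_jordanBlocks {V : Type} [AddCommGroup V] [Module κ V]
    [FiniteDimensional κ V] (T : V →ₗ[κ] V) :
    ∃ (ι : Type) (_ : Fintype ι) (lam : ι → κ) (k : ι → ℕ) (u : V ≃ₗ[κ] ∀ i, Fin (k i) → κ),
      ∀ x i, u (T x) i = (jordanMatrix κ (lam i) (k i)).mulVec (u x i) := by
  obtain ⟨ι, _, p, hp, k, ⟨g⟩⟩ :=
    Module.equiv_directSum_of_isTorsion (Module.AEval.isTorsion_of_finiteDimensional κ V T)
  choose lam hlam using fun i => exists_associated_X_sub_C_of_irreducible (hp i)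
  have hspan : ∀ i, Submodule.span κ[X] {p i ^ k i} = Submodule.span κ[X] {(X - C (lam i)) ^ k i} :=
    fun i => Ideal.span_singleton_eq_span_singleton.mpr ((hlam i).pow_pow)
  let w : Module.AEval' T ≃ₗ[κ[X]] ∀ i, κ[X] ⧸ Submodule.span κ[X] {(X - C (lam i)) ^ k i} :=
    g.trans ((DirectSum.linearEquivFunOnFintype _ _ _).trans
      (LinearEquiv.piCongrRight fun i => Submodule.quotEquivOfEq _ _ (hspan i)))
  refine ⟨ι, inferInstance, lam, k, (Module.AEval'.of T).trans ((w.restrictScalars κ).trans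
    (LinearEquiv.piCongrRight fun i => (jordanBasis (lam i) (k i)).equivFun)), fun x i => ?_⟩
  show (jordanBasis _ _).equivFun (w (Module.AEval'.of T (T x)) i) = _
  rw [← Module.AEval'.X_smul_of, map_smul, Pi.smul_apply, jordanBasis_equivFun_X_smul]
  rfl

theorem exists_jordanBlocks_fin {V : Type} [AddCommGroup V] [Module κ V]
    [FiniteDimensional κ V] (T : V →ₗ[κ] V) :
    ∃ (N : ℕ) (lam : Fin N → κ) (k : Fin N → ℕ), (∀ j, 1 ≤ k j) ∧
      ∃ u : V ≃ₗ[κ] ∀ j, Fin (k j) → κ,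
        ∀ x j, u (T x) j = (jordanMatrix κ (lam j) (k j)).mulVec (u x j) := by
  classical
  obtain ⟨ι, _, lam, k, u, hu⟩ := exists_jordanBlocks T
  let e := (Fintype.equivFin {i // k i ≠ 0}).symm
  have hF : ∀ i, ¬ k i ≠ 0 → Subsingleton (Fin (k i) → κ) := fun i hi => by
    rw [not_not.mp hi]; infer_instance
  exact ⟨_, fun j => lam (e j), fun j => k (e j), fun j => Nat.one_le_iff_ne_zero.mpr (e j).2,
    (u.trans (LinearEquiv.piSubtypeOfSubsingleton _ _ hF)).trans
      (LinearEquiv.piCongrLeft κ (fun i : {i // k i ≠ 0} => Fin (k i) → κ) e).symm,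
    fun x j => hu x (e j)⟩

end JordanForm

theorem Fin.val_add_one_of_add_one_ne_zero {m : ℕ} [NeZero m] {i : Fin m} (h : i + 1 ≠ 0) :
    ((i + 1 : Fin m) : ℕ) = i + 1 := by
  obtain ⟨n, rfl⟩ := Nat.exists_eq_succ_of_ne_zero (NeZero.ne m)
  rw [Fin.val_add_one, if_neg (fun hl => h (by rw [hl, Fin.last_add_one]))]

theorem Fin.val_add_one_of_add_one_eq_zero {m : ℕ} [NeZero m] {i : Fin m} (h : i + 1 = 0) :
    (i : ℕ) + 1 = m := by
  obtain ⟨n, rfl⟩ := Nat.exists_eq_succ_of_ne_zero (NeZero.ne m)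
  have := Fin.val_add_one i
  split_ifs at this with hl
  · rw [hl, Fin.val_last]
  · rw [h, Fin.val_zero] at this; omega

namespace QRep

variable {κ : Type} [Field κ] {m : ℕ} [NeZero m]

theorem isIsomorphic_of_intertwining {ρ σ : QRep κ m} (hρ : ∀ i, Function.Bijective (ρ.β i))
    (hσ : ∀ i, Function.Bijective (σ.β i))
    (e : ∀ i, ρ.W i →ₗ[κ] ρ.W (i + 1)) (he : ∀ i x, ρ.β i (e i x) = ρ.α i x)
    (f : ∀ i, σ.W i →ₗ[κ] σ.W (i + 1)) (hf : ∀ i y, σ.β i (f i y) = σ.α i y)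
    (φ : ∀ i, ρ.W i ≃ₗ[κ] σ.W i) (hφ : ∀ i x, φ (i + 1) (e i x) = f i (φ i x)) :
    ρ.IsIsomorphic σ := by
  let βρ i := LinearEquiv.ofBijective (ρ.β i) (hρ i)
  have hβρ : ∀ i x, (βρ i).symm (ρ.α i x) = e i x := fun i x => by
    rw [LinearEquiv.symm_apply_eq, ← he]; rfl
  refine ⟨⟨φ, fun i => ((βρ i).symm.trans (φ (i + 1))).trans
    (LinearEquiv.ofBijective (σ.β i) (hσ i)), fun i x => ?_, fun i x => ?_⟩⟩
  · simp only [LinearEquiv.trans_apply, LinearEquiv.ofBijective_apply, hβρ, hφ, hf]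
  · simp only [LinearEquiv.trans_apply, LinearEquiv.ofBijective_apply]
    rw [show ρ.β i x = βρ i x from rfl, LinearEquiv.symm_apply_apply]

theorem dsumFin_jordanRep_α_apply {N : ℕ} (lam : Fin N → κ) (k : Fin N → ℕ) (i : Fin m)
    (v : ∀ j, Fin (k j) → κ) (j : Fin N) :
    (dsumFin fun j => jordanRep κ m (lam j) (k j)).α i v j =
      if i = 0 then (jordanMatrix κ (lam j) (k j)).mulVec (v j) else v j := by
  simp only [dsumFin, jordanRep]
  split_ifs <;> rfl

variable (ρ : QRep κ m) (e : ∀ i, ρ.W i ≃ₗ[κ] ρ.W (i + 1))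

theorem castWE_castWE {a b c : Fin m} (h₁ : a = b) (h₂ : b = c) (x : ρ.W a) :
    ρ.castWE h₂ (ρ.castWE h₁ x) = ρ.castWE (h₁.trans h₂) x := by
  subst h₁ h₂; rfl

theorem castWE_self {a : Fin m} (h : a = a) (x : ρ.W a) : ρ.castWE h x = x := rfl

theorem cyclicCompE_zero (i : Fin m) (x : ρ.W i) :
    ρ.cyclicCompE e 0 i x = ρ.castWE (by simp) x := rfl

theorem cyclicCompE_succ (n : ℕ) (i : Fin m) (x : ρ.W i) :
    ρ.cyclicCompE e (n + 1) i x =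
      ρ.castWE (by rw [Nat.cast_succ, add_assoc]) (e (i + n) (ρ.cyclicCompE e n i x)) := rfl

theorem castWE_cyclicCompE_congr {n n' : ℕ} (hn : n = n') {i a : Fin m} (h : i + n = a)
    (h' : i + n' = a) (x : ρ.W i) :
    ρ.castWE h (ρ.cyclicCompE e n i x) = ρ.castWE h' (ρ.cyclicCompE e n' i x) := by
  subst hn; rfl

theorem apply_castWE_cyclicCompE (n : ℕ) {i a : Fin m} (h : i + n = a) (x : ρ.W i) :
    e a (ρ.castWE h (ρ.cyclicCompE e n i x)) =
      ρ.castWE (by rw [← h, Nat.cast_succ, add_assoc]) (ρ.cyclicCompE e (n + 1) i x) := by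
  subst h
  rw [cyclicCompE_succ, castWE_castWE, castWE_self, castWE_self]

theorem Ci_zero (x : ρ.W 0) : ρ.Ci e 0 x = x := by
  rw [Ci, LinearEquiv.trans_apply, ρ.castWE_cyclicCompE_congr e (Fin.val_zero m) _ (by simp),
    cyclicCompE_zero, castWE_castWE, castWE_self]

theorem Ci_of_eq_zero {a : Fin m} (h : a = 0) (x : ρ.W 0) : ρ.Ci e a x = ρ.castWE h.symm x := by
  subst h; exact ρ.Ci_zero e x

/-- Closing the cycle at `i + 1 = 0` picks up the monodromy. -/
theorem e_Ci (i : Fin m) (z : ρ.W 0) :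
    e i (ρ.Ci e i z) = ρ.Ci e (i + 1) (if i + 1 = 0 then ρ.Ti e 0 z else z) := by
  rw [Ci, LinearEquiv.trans_apply, apply_castWE_cyclicCompE]
  split_ifs with h
  · rw [Ci_of_eq_zero _ _ h, Ti, LinearEquiv.trans_apply, castWE_castWE]
    exact ρ.castWE_cyclicCompE_congr e (Fin.val_add_one_of_add_one_eq_zero h) _ _ z
  · exact ρ.castWE_cyclicCompE_congr e (Fin.val_add_one_of_add_one_ne_zero h).symm _ _ z

theorem isIsomorphic_dsumFin_jordanRep (hβ : ∀ i, Function.Bijective (ρ.β i))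
    (he : ∀ i x, ρ.β i (e i x) = ρ.α i x)
    {N : ℕ} (lam : Fin N → κ) (k : Fin N → ℕ) (u : ρ.W 0 ≃ₗ[κ] ∀ j, Fin (k j) → κ)
    (hu : ∀ x j, u (ρ.Ti e 0 x) j = (jordanMatrix κ (lam j) (k j)).mulVec (u x j)) :
    ρ.IsIsomorphic (dsumFin fun j => jordanRep κ m (lam j) (k j)) := by
  let ψ : Fin m → (ρ.W 0 ≃ₗ[κ] ∀ j, Fin (k j) → κ) := fun i =>
    if i = 0 then u else (ρ.Ti e 0).trans u
  refine isIsomorphic_of_intertwining hβ (fun _ => Function.bijective_id) (fun i => e i) he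
    (fun i => (dsumFin fun j => jordanRep κ m (lam j) (k j)).α i) (fun _ _ => rfl)
    (fun i => (ρ.Ci e i).symm.trans (ψ i)) fun i x => ?_
  obtain ⟨z, rfl⟩ := (ρ.Ci e i).surjective x
  have hψ : ψ (i + 1) (if i + 1 = 0 then ρ.Ti e 0 z else z) = u (ρ.Ti e 0 z) := by
    split_ifs with h <;> simp [ψ, h]
  show ψ (i + 1) ((ρ.Ci e (i + 1)).symm (e i (ρ.Ci e i z))) =
    (dsumFin fun j => jordanRep κ m (lam j) (k j)).α i (ψ i ((ρ.Ci e i).symm (ρ.Ci e i z)))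
  rw [e_Ci, LinearEquiv.symm_apply_apply, LinearEquiv.symm_apply_apply, hψ]
  funext j
  rw [dsumFin_jordanRep_α_apply]
  split_ifs with h <;> simp [ψ, h, hu]

end QRep

theorem jordan_decomposition_of_bijective_general {κ : Type} [Field κ] [IsAlgClosed κ]
    {m : ℕ} [NeZero m] (ρ : QRep κ m)
    (hβ : ∀ i, Function.Bijective (ρ.β i))
    (e : ∀ i, ρ.W i ≃ₗ[κ] ρ.W (i + 1)) (he : ∀ i x, ρ.β i (e i x) = ρ.α i x) :
    ∃ (N : ℕ) (lam : Fin N → κ) (k : Fin N → ℕ),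
      (∀ j, lam j ≠ 0) ∧ (∀ j, 1 ≤ k j) ∧
      ρ.IsIsomorphic (QRep.dsumFin fun j => jordanRep κ m (lam j) (k j)) ∧
      ∃ u : ρ.W 0 ≃ₗ[κ] ∀ j, Fin (k j) → κ,
        ∀ x j, u (ρ.Ti e 0 x) j = (jordanMatrix κ (lam j) (k j)).mulVec (u x j) := by
  obtain ⟨N, lam, k, hk, u, hu⟩ := exists_jordanBlocks_fin (ρ.Ti e 0).toLinearMap
  have hlam : ∀ j, lam j ≠ 0 := fun j => ne_zero_of_injective_jordanMatrix_mulVec (hk j)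
    (LinearMap.injective_of_pi_conj (ρ.Ti e 0).injective
      (fun j => (jordanMatrix κ (lam j) (k j)).mulVecLin) u hu j)
  exact ⟨N, lam, k, hlam, hk, ρ.isIsomorphic_dsumFin_jordanRep e hβ he lam k u hu, u, hu⟩

/-- Over an algebraically closed field, a representation of `G_{2m}` with all
maps `α_i`, `β_i` bijective decomposes as a finite direct sum of Jordan-cell representations
`ρ^J(λ_j,k_j)` with `λ_j ≠ 0`, `k_j ≥ 1`; the pairs `(λ_j,k_j)` are the Jordan cells
(eigenvalue, block size) of the monodromy `T`. -/
theorem jordan_decomposition_of_bijective {κ : Type} [Field κ] [IsAlgClosed κ]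
    {m : ℕ} [NeZero m] (ρ : QRep κ m)
    (hα : ∀ i, Function.Bijective (ρ.α i)) (hβ : ∀ i, Function.Bijective (ρ.β i))
    (e : ∀ i, ρ.W i ≃ₗ[κ] ρ.W (i + 1)) (he : ∀ i x, ρ.β i (e i x) = ρ.α i x) :
    ∃ (N : ℕ) (lam : Fin N → κ) (k : Fin N → ℕ),
      (∀ j, lam j ≠ 0) ∧ (∀ j, 1 ≤ k j) ∧
      ρ.IsIsomorphic (QRep.dsumFin fun j => jordanRep κ m (lam j) (k j)) ∧
      ∃ u : ρ.W 0 ≃ₗ[κ] ∀ j, Fin (k j) → κ,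
        ∀ x j, u (ρ.Ti e 0 x) j = (jordanMatrix κ (lam j) (k j)).mulVec (u x j) :=
  jordan_decomposition_of_bijective_general ρ hβ e he
end
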